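/- For every α ∈ [0,n) there exists a nonnegative solution u of the heat equation on ℝⁿ × (0,∞), given as heat extension of a finite Radon measure, such that the set T_α(u) = { x : limsup_{t→0⁺} t^{α/2} u(x,t) > 0 } has Hausdorff dimension exactly n − α. -/

import Mathlib

open MeasureTheory Filter Metric Set

noncomputable def heatK (n : ℕ) (x : EuclideanSpace ℝ (Fin n)) (t : ℝ) : ℝ :=
  (4 * Real.pi * t) ^ (-(n : ℝ) / 2) * Real.exp (-‖x‖ ^ 2 / (4 * t))

/-!
Let `s = (n - α) / n ∈ (0, 1]`, choose `a ∈ (0, 1/2]` with `a ^ s = 1/2`, and let `K ⊆ ℝⁿ` be the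
product of `n` copies of the Cantor set `{∑ (1 - a) aⁱ ωᵢ : ω ∈ {0,1}^ℕ}`, carrying the image `μ` of
the coin-flipping measure. Then `μ` is Ahlfors regular of dimension `d = s n = n - α`:
`μ(B(x, r)) ≤ C rᵈ` for all `x`, and `μ(B(x, r)) ≥ c rᵈ` for `x ∈ K`, `r ≤ √n`.
The upper bound gives `dim K ≥ d` (mass distribution principle), and the cover of `K` by `2ⁿᵏ`
cubes of side `aᵏ` gives `dim K ≤ d`.

For the heat extension `u` of `μ`, the kernel is `≳ t^{-n/2}` on `B(x, √t)`, so at `x ∈ K`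
`t^{α/2} u(x, t) ≳ t^{(α - n)/2} μ(B(x, √t)) ≳ 1`; off the closed set `K` carrying `μ`,
`u(x, t)` decays like `exp(-δ² / 4t)`. Hence `T_α(u) = K`.
-/

open scoped ENNReal NNReal Topology
open Real

theorem card_mul_le_of_pairwise_le_dist {ι : Type*} {S : Finset ι} {f : ι → ℝ} {δ u v : ℝ}
    (hS : (S : Set ι).Pairwise fun i j => δ ≤ dist (f i) (f j)) (hf : ∀ i ∈ S, f i ∈ Icc u v) :
    S.card * ENNReal.ofReal δ ≤ ENNReal.ofReal (v - u + δ) := by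
  have hdisj : (S : Set ι).PairwiseDisjoint fun i => Ico (f i) (f i + δ) := by
    intro i hi j hj hij
    refine Set.disjoint_left.2 fun y hyi hyj => (hS hi hj hij).not_gt ?_
    rw [Real.dist_eq, abs_lt]
    constructor <;> linarith [hyi.1, hyi.2, hyj.1, hyj.2]
  calc S.card * ENNReal.ofReal δ = ∑ i ∈ S, volume (Ico (f i) (f i + δ)) := by
        simp [Real.volume_Ico]
    _ = volume (⋃ i ∈ S, Ico (f i) (f i + δ)) :=
        (measure_biUnion_finset hdisj fun _ _ => measurableSet_Ico).symm
    _ ≤ volume (Icc u (v + δ)) := by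
        refine measure_mono (iUnion₂_subset fun i hi y hy => ?_)
        exact ⟨(hf i hi).1.trans hy.1, hy.2.le.trans (by linarith [(hf i hi).2])⟩
    _ = ENNReal.ofReal (v - u + δ) := by rw [Real.volume_Icc]; ring_nf

theorem dist_le_sqrt_card_mul {ι : Type*} [Fintype ι] {x y : EuclideanSpace ℝ ι} {r : ℝ}
    (hr : 0 ≤ r) (h : ∀ i, dist (x i) (y i) ≤ r) : dist x y ≤ √(Fintype.card ι) * r := by
  rw [EuclideanSpace.dist_eq, ← Real.sqrt_sq hr, ← Real.sqrt_mul (Nat.cast_nonneg _)]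
  refine Real.sqrt_le_sqrt ?_
  calc ∑ i, dist (x i) (y i) ^ 2 ≤ ∑ _i : ι, r ^ 2 :=
        Finset.sum_le_sum fun i _ => pow_le_pow_left₀ dist_nonneg (h i) 2
    _ = Fintype.card ι * r ^ 2 := by simp

theorem measure_le_mul_ediam_rpow {X : Type*} [PseudoMetricSpace X] [MeasurableSpace X]
    {μ : Measure X} {C : ℝ≥0∞} (hC : C ≠ ∞) {d : ℝ}
    (h : ∀ x r, 0 < r → μ (closedBall x r) ≤ C * ENNReal.ofReal r ^ d) {U : Set X}
    (hU : ediam U ≠ ∞) : μ U ≤ C * ediam U ^ d := by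
  rcases U.eq_empty_or_nonempty with rfl | ⟨x, hx⟩
  · simp
  have hcont : Continuous fun r : ℝ => C * ENNReal.ofReal r ^ d :=
    (ENNReal.continuous_const_mul hC).comp
      (ENNReal.continuous_rpow_const.comp ENNReal.continuous_ofReal)
  have hlim := (hcont.tendsto (ediam U).toReal).mono_left
    (nhdsWithin_le_nhds (s := Ioi (ediam U).toReal))
  rw [ENNReal.ofReal_toReal hU] at hlim
  refine ge_of_tendsto hlim (eventually_nhdsWithin_of_forall fun r hr => ?_)
  refine (measure_mono fun y hy => ?_).trans (h x r (ENNReal.toReal_nonneg.trans_lt hr))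
  rw [mem_closedBall, dist_edist]
  exact (ENNReal.toReal_mono hU (edist_le_ediam_of_mem hy hx)).trans (le_of_lt hr)

theorem le_dimH_of_measure_closedBall_le {X : Type*} [MetricSpace X] [MeasurableSpace X]
    [BorelSpace X] {μ : Measure X} {C : ℝ≥0∞} (hC : C ≠ ∞) {d : ℝ≥0}
    (h : ∀ x r, 0 < r → μ (closedBall x r) ≤ C * ENNReal.ofReal r ^ (d : ℝ)) {s : Set X}
    (hs : μ s ≠ 0) : (d : ℝ≥0∞) ≤ dimH s := by
  have hle : C⁻¹ • μ ≤ μH[d] := by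
    refine Measure.le_hausdorffMeasure d _ 1 one_pos fun U hU => ?_
    rw [Measure.smul_apply, smul_eq_mul, mul_comm, ← div_eq_mul_inv]
    exact ENNReal.div_le_of_le_mul
      ((measure_le_mul_ediam_rpow hC h (ne_top_of_le_ne_top ENNReal.one_ne_top hU)).trans_eq
        (mul_comm _ _))
  refine le_dimH_of_hausdorffMeasure_ne_zero fun h0 => ?_
  have := hle s
  rw [h0, Measure.smul_apply, smul_eq_mul, nonpos_iff_eq_zero, mul_eq_zero] at this
  exact this.elim (ENNReal.inv_ne_zero.2 hC) hs

theorem hausdorffMeasure_eq_zero_of_forall_cover {X : Type*} [EMetricSpace X] [MeasurableSpace X]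
    [BorelSpace X] {s : Set X} {ι : ℕ → Type*} [∀ k, Fintype (ι k)] (t : ∀ k, ι k → Set X)
    (hcover : ∀ k, s ⊆ ⋃ i, t k i) {N : ℕ} (hcard : ∀ k, Fintype.card (ι k) ≤ N ^ k)
    {C q d : ℝ} (hC : 0 ≤ C) (hq : 0 < q) (hq1 : q < 1)
    (hdiam : ∀ k i, ediam (t k i) ≤ ENNReal.ofReal (C * q ^ k)) (hd : 0 ≤ d)
    (hN : N * q ^ d < 1) : μH[d] s = 0 := by
  have hsum : ∀ k, ∑ i, ediam (t k i) ^ d ≤ ENNReal.ofReal (C ^ d * (N * q ^ d) ^ k) := by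
    intro k
    have hCq : 0 ≤ C * q ^ k := by positivity
    calc ∑ i, ediam (t k i) ^ d ≤ ∑ _i : ι k, ENNReal.ofReal ((C * q ^ k) ^ d) := by
          refine Finset.sum_le_sum fun i _ => ?_
          rw [← ENNReal.ofReal_rpow_of_nonneg hCq hd]
          exact ENNReal.rpow_le_rpow (hdiam k i) hd
      _ ≤ (N ^ k : ℕ) * ENNReal.ofReal ((C * q ^ k) ^ d) := by
          rw [Finset.sum_const, Finset.card_univ, nsmul_eq_mul]
          gcongr
          exact_mod_cast hcard k
      _ = ENNReal.ofReal (C ^ d * (N * q ^ d) ^ k) := by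
          rw [← ENNReal.ofReal_natCast, ← ENNReal.ofReal_mul (by positivity), Real.mul_rpow hC
            (by positivity), ← Real.rpow_natCast, ← Real.rpow_mul hq.le, mul_comm (k : ℝ),
            Real.rpow_mul hq.le, Real.rpow_natCast]
          congr 1
          push_cast
          ring
  have hlim : Tendsto (fun k : ℕ => ENNReal.ofReal (C ^ d * (N * q ^ d) ^ k)) atTop (𝓝 0) := by
    rw [← ENNReal.ofReal_zero, ← mul_zero (C ^ d)]
    exact ENNReal.tendsto_ofReal
      ((tendsto_pow_atTop_nhds_zero_of_lt_one (by positivity) hN).const_mul _)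
  have hdiam_lim : Tendsto (fun k : ℕ => ENNReal.ofReal (C * q ^ k)) atTop (𝓝 0) := by
    rw [← ENNReal.ofReal_zero, ← mul_zero C]
    exact ENNReal.tendsto_ofReal ((tendsto_pow_atTop_nhds_zero_of_lt_one hq.le hq1).const_mul _)
  refine le_antisymm ?_ zero_le
  calc μH[d] s ≤ liminf (fun k => ∑ i, ediam (t k i) ^ d) atTop :=
        Measure.hausdorffMeasure_le_liminf_sum _ s _ hdiam_lim t
          (Eventually.of_forall hdiam) (Eventually.of_forall hcover)
    _ ≤ liminf (fun k : ℕ => ENNReal.ofReal (C ^ d * (N * q ^ d) ^ k)) atTop :=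
        liminf_le_liminf (Eventually.of_forall hsum)
    _ = 0 := hlim.liminf_eq

theorem dimH_le_of_forall_cover {X : Type*} [EMetricSpace X] {s : Set X} {ι : ℕ → Type*}
    [∀ k, Fintype (ι k)] (t : ∀ k, ι k → Set X) (hcover : ∀ k, s ⊆ ⋃ i, t k i) {N : ℕ}
    (hcard : ∀ k, Fintype.card (ι k) ≤ N ^ k) {C q d : ℝ} (hC : 0 ≤ C) (hq : 0 < q) (hq1 : q < 1)
    (hdiam : ∀ k i, ediam (t k i) ≤ ENNReal.ofReal (C * q ^ k)) (hd : 0 ≤ d)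
    (hN : N * q ^ d ≤ 1) : dimH s ≤ ENNReal.ofReal d := by
  borelize X
  refine dimH_le fun d' hd' => ?_
  by_contra! hlt
  have hdd' : d < d' := by
    rwa [← ENNReal.ofReal_coe_nnreal, ENNReal.ofReal_lt_ofReal_iff_of_nonneg hd] at hlt
  have hN' : N * q ^ (d' : ℝ) < 1 := by
    rcases N.eq_zero_or_pos with rfl | hN0
    · simp
    exact (mul_lt_mul_of_pos_left (Real.rpow_lt_rpow_of_exponent_gt hq hq1 hdd')
      (Nat.cast_pos.2 hN0)).trans_le hN
  rw [hausdorffMeasure_eq_zero_of_forall_cover t hcover hcard hC hq hq1 hdiam d'.coe_nonneg hN']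
    at hd'
  exact ENNReal.zero_ne_top hd'

noncomputable def coinFlips : Measure (ℕ → Bool) :=
  Measure.infinitePi fun _ => (PMF.uniformOfFintype Bool).toMeasure

instance : IsProbabilityMeasure coinFlips := by
  unfold coinFlips
  infer_instance

theorem coinFlips_restrict_preimage_singleton (k : ℕ) (w : Finset.range k → Bool) :
    coinFlips ((Finset.range k).restrict ⁻¹' {w}) = 2⁻¹ ^ k := by
  rw [← Measure.map_apply (Finset.measurable_restrict _) (measurableSet_singleton w), coinFlips,
    Measure.infinitePi_map_restrict, Measure.pi_singleton]
  simp

section CantorSet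

variable {a : ℝ}

def cantorTerm (a : ℝ) (ω : ℕ → Bool) (i : ℕ) : ℝ := (1 - a) * a ^ i * (ω i).toNat

noncomputable def cantorSum (a : ℝ) (ω : ℕ → Bool) (k : ℕ) : ℝ :=
  ∑ i ∈ Finset.range k, cantorTerm a ω i

noncomputable def cantorMap (a : ℝ) (ω : ℕ → Bool) : ℝ := ∑' i, cantorTerm a ω i

theorem cantorTerm_nonneg (ha : 0 ≤ a) (ha1 : a ≤ 1) (ω : ℕ → Bool) (i : ℕ) :
    0 ≤ cantorTerm a ω i :=
  mul_nonneg (mul_nonneg (sub_nonneg.2 ha1) (pow_nonneg ha i)) (Nat.cast_nonneg _)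

theorem cantorTerm_le (ha : 0 ≤ a) (ha1 : a ≤ 1) (ω : ℕ → Bool) (i : ℕ) :
    cantorTerm a ω i ≤ (1 - a) * a ^ i := by
  refine mul_le_of_le_one_right (mul_nonneg (sub_nonneg.2 ha1) (pow_nonneg ha i)) ?_
  cases ω i <;> simp

theorem summable_cantorTerm (ha : 0 ≤ a) (ha1 : a < 1) (ω : ℕ → Bool) :
    Summable (cantorTerm a ω) :=
  .of_nonneg_of_le (cantorTerm_nonneg ha ha1.le ω) (cantorTerm_le ha ha1.le ω)
    ((summable_geometric_of_lt_one ha ha1).mul_left _)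

theorem cantorSum_nonneg (ha : 0 ≤ a) (ha1 : a ≤ 1) (ω : ℕ → Bool) (k : ℕ) :
    0 ≤ cantorSum a ω k :=
  Finset.sum_nonneg fun i _ => cantorTerm_nonneg ha ha1 ω i

theorem cantorSum_le (ha : 0 ≤ a) (ha1 : a ≤ 1) (ω : ℕ → Bool) (k : ℕ) :
    cantorSum a ω k ≤ 1 - a ^ k := by
  rw [← mul_neg_geom_sum, Finset.mul_sum]
  exact Finset.sum_le_sum fun i _ => cantorTerm_le ha ha1 ω i

theorem cantorMap_mem_Icc (ha : 0 ≤ a) (ha1 : a < 1) (ω : ℕ → Bool) (k : ℕ) :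
    cantorMap a ω ∈ Icc (cantorSum a ω k) (cantorSum a ω k + a ^ k) := by
  have hsum := summable_cantorTerm ha ha1 ω
  have htail : ∑' i, cantorTerm a ω (i + k) ≤ a ^ k := by
    calc ∑' i, cantorTerm a ω (i + k) ≤ ∑' i, a ^ k * ((1 - a) * a ^ i) :=
          Summable.tsum_le_tsum (fun i => (cantorTerm_le ha ha1.le ω _).trans_eq (by ring))
            ((summable_nat_add_iff k).2 hsum)
            (((summable_geometric_of_lt_one ha ha1).mul_left _).mul_left _)
      _ = a ^ k := by
          rw [tsum_mul_left, tsum_mul_left, tsum_geometric_of_lt_one ha ha1,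
            mul_inv_cancel₀ (sub_ne_zero.2 ha1.ne'), mul_one]
  rw [cantorMap, ← hsum.sum_add_tsum_nat_add k, cantorSum]
  exact ⟨le_add_of_nonneg_right (tsum_nonneg fun i => cantorTerm_nonneg ha ha1.le ω _),
    (add_le_add_iff_left _).2 htail⟩

theorem cantorSum_congr {ω ω' : ℕ → Bool} {k : ℕ} (h : ∀ i < k, ω i = ω' i) :
    cantorSum a ω k = cantorSum a ω' k :=
  Finset.sum_congr rfl fun i hi => by rw [cantorTerm, cantorTerm, h i (Finset.mem_range.1 hi)]

theorem dist_cantorMap_le (ha : 0 ≤ a) (ha1 : a < 1) {ω ω' : ℕ → Bool} {k : ℕ}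
    (h : ∀ i < k, ω i = ω' i) : dist (cantorMap a ω) (cantorMap a ω') ≤ a ^ k := by
  have hω := cantorMap_mem_Icc ha ha1 ω k
  have hω' := cantorMap_mem_Icc ha ha1 ω' k
  rw [cantorSum_congr h] at hω
  rw [Real.dist_eq, abs_le]
  constructor <;> linarith [hω.1, hω.2, hω'.1, hω'.2]

theorem cantorSum_succ (ω : ℕ → Bool) (k : ℕ) :
    cantorSum a ω (k + 1) = (1 - a) * (ω 0).toNat + a * cantorSum a (fun i => ω (i + 1)) k := by
  simp only [cantorSum, cantorTerm, Finset.sum_range_succ', Finset.mul_sum]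
  rw [add_comm]
  congr 1
  · ring
  · exact Finset.sum_congr rfl fun i _ => by ring

theorem pow_le_abs_cantorSum_sub (ha : 0 ≤ a) (ha2 : a ≤ 1 / 2) :
    ∀ {k : ℕ} {ω ω' : ℕ → Bool}, (∃ i < k, ω i ≠ ω' i) →
      a ^ k ≤ |cantorSum a ω k - cantorSum a ω' k|
  | 0, _, _, ⟨i, hi, _⟩ => absurd hi (Nat.not_lt_zero i)
  | k + 1, ω, ω', ⟨i, hi, hne⟩ => by
    rw [cantorSum_succ, cantorSum_succ]
    by_cases h0 : ω 0 = ω' 0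
    · obtain ⟨j, rfl⟩ : ∃ j, i = j + 1 :=
        Nat.exists_eq_add_one_of_ne_zero fun h => hne (h ▸ h0)
      have := pow_le_abs_cantorSum_sub ha ha2 (ω := fun i => ω (i + 1))
        (ω' := fun i => ω' (i + 1)) (k := k) ⟨j, by omega, hne⟩
      rw [h0, add_sub_add_left_eq_sub, ← mul_sub, abs_mul, abs_of_nonneg ha, pow_succ']
      exact mul_le_mul_of_nonneg_left this ha
    -- Different first digits: since `a ≤ 1 / 2`, the gap `1 - a` outweighs the tails.
    · have hdigit : |((ω 0).toNat : ℝ) - (ω' 0).toNat| = 1 := by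
        revert h0; cases ω 0 <;> cases ω' 0 <;> simp
      have htail : |cantorSum a (fun i => ω (i + 1)) k - cantorSum a (fun i => ω' (i + 1)) k|
          ≤ 1 - a ^ k := by
        have ha1 : a ≤ 1 := by linarith
        exact abs_sub_le_of_nonneg_of_le (cantorSum_nonneg ha ha1 _ k) (cantorSum_le ha ha1 _ k)
          (cantorSum_nonneg ha ha1 _ k) (cantorSum_le ha ha1 _ k)
      calc a ^ (k + 1) ≤ (1 - a) * 1 - a * (1 - a ^ k) := by rw [pow_succ']; linarith
        _ ≤ |(1 - a) * ((ω 0).toNat - (ω' 0).toNat)| - |a * (cantorSum a (fun i => ω (i + 1)) k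
              - cantorSum a (fun i => ω' (i + 1)) k)| := by
            rw [abs_mul, abs_mul, hdigit, abs_of_nonneg ha, abs_of_nonneg (by linarith)]
            gcongr
        _ ≤ _ := (abs_sub_abs_le_abs_add _ _).trans_eq (congrArg abs (by ring))

theorem continuous_cantorMap (ha : 0 ≤ a) (ha1 : a < 1) : Continuous (cantorMap a) :=
  continuous_tsum (fun i => continuous_const.mul
      ((continuous_of_discreteTopology (f := fun b : Bool => (b.toNat : ℝ))).comp
        (continuous_apply i)))
    ((summable_geometric_of_lt_one ha ha1).mul_left (1 - a))
    fun i ω => by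
      rw [Real.norm_of_nonneg (cantorTerm_nonneg ha ha1.le ω i)]
      exact cantorTerm_le ha ha1.le ω i

theorem le_coinFlips_preimage_closedBall (ha : 0 ≤ a) (ha1 : a < 1) (ω : ℕ → Bool) (k : ℕ) :
    2⁻¹ ^ k ≤ coinFlips (cantorMap a ⁻¹' closedBall (cantorMap a ω) (a ^ k)) := by
  rw [← coinFlips_restrict_preimage_singleton k ((Finset.range k).restrict ω)]
  refine measure_mono fun ω' hω' => mem_closedBall.2 (dist_cantorMap_le ha ha1 fun i hi => ?_)
  exact congrFun hω' ⟨i, Finset.mem_range.2 hi⟩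

/-- The level-`k` cylinders meeting the preimage have `a ^ k`-separated partial sums in an interval
of length `3 * a ^ k`, so there are at most four of them. -/
theorem coinFlips_preimage_closedBall_le (ha : 0 < a) (ha2 : a ≤ 1 / 2) (x : ℝ) (k : ℕ) :
    coinFlips (cantorMap a ⁻¹' closedBall x (a ^ k)) ≤ 4 * 2⁻¹ ^ k := by
  classical
  have ha1 : a < 1 := by linarith
  set A := cantorMap a ⁻¹' closedBall x (a ^ k)
  set S := Finset.univ.filter fun w : Finset.range k → Bool =>
    ∃ ω ∈ A, (Finset.range k).restrict ω = w
  have hcover : A ⊆ ⋃ w ∈ S, (Finset.range k).restrict ⁻¹' {w} := fun ω hω =>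
    mem_iUnion₂.2 ⟨_, Finset.mem_filter.2 ⟨Finset.mem_univ _, ω, hω, rfl⟩, rfl⟩
  have hcard : (S.card : ℝ≥0∞) ≤ 4 := by
    choose! rep hrepA hrep using fun w (hw : w ∈ S) => (Finset.mem_filter.1 hw).2
    have hsep : (S : Set _).Pairwise fun w w' =>
        a ^ k ≤ dist (cantorSum a (rep w) k) (cantorSum a (rep w') k) := by
      intro w hw w' hw' hne
      refine pow_le_abs_cantorSum_sub ha.le ha2 ?_
      by_contra! heq
      exact hne (by rw [← hrep w hw, ← hrep w' hw']; ext i; exact heq i (Finset.mem_range.1 i.2))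
    have hmem : ∀ w ∈ S, cantorSum a (rep w) k ∈ Icc (x - 2 * a ^ k) (x + a ^ k) := by
      intro w hw
      have h1 := cantorMap_mem_Icc ha.le ha1 (rep w) k
      have h2 := abs_le.1 (mem_closedBall.1 (hrepA w hw))
      constructor <;> linarith [h1.1, h1.2, h2.1, h2.2]
    have hpos : ENNReal.ofReal (a ^ k) ≠ 0 := ENNReal.ofReal_pos.2 (pow_pos ha k) |>.ne'
    refine (ENNReal.mul_le_mul_iff_left hpos ENNReal.ofReal_ne_top).1 ?_
    convert card_mul_le_of_pairwise_le_dist hsep hmem using 1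
    rw [show x + a ^ k - (x - 2 * a ^ k) + a ^ k = 4 * a ^ k by ring,
      ENNReal.ofReal_mul (by norm_num), ENNReal.ofReal_ofNat]
  calc coinFlips A ≤ ∑ w ∈ S, coinFlips ((Finset.range k).restrict ⁻¹' {w}) :=
        (measure_mono hcover).trans (measure_biUnion_finset_le _ _)
    _ = S.card * 2⁻¹ ^ k := by
        simp only [coinFlips_restrict_preimage_singleton, Finset.sum_const, nsmul_eq_mul]
    _ ≤ 4 * 2⁻¹ ^ k := by gcongr

theorem exists_rpow_eq_inv_two {s : ℝ} (hs : 0 < s) (hs1 : s ≤ 1) :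
    ∃ a : ℝ, 0 < a ∧ a ≤ 1 / 2 ∧ a ^ s = 2⁻¹ := by
  refine ⟨2 ^ (-s⁻¹), by positivity, ?_, ?_⟩
  · refine (Real.rpow_le_rpow_of_exponent_le one_le_two
      (neg_le_neg (one_le_inv₀ hs |>.2 hs1))).trans_eq ?_
    norm_num
  · rw [← Real.rpow_mul zero_le_two, neg_mul, inv_mul_cancel₀ hs.ne', Real.rpow_neg_one]

theorem pos_of_rpow_eq_inv_two (ha : 0 < a) (ha1 : a < 1) {s : ℝ} (hs : a ^ s = 2⁻¹) : 0 < s := by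
  by_contra! h
  have := Real.one_le_rpow_of_pos_of_le_one_of_nonpos ha ha1.le h
  rw [hs] at this
  norm_num at this

theorem inv_two_pow_eq_ofReal_rpow (ha : 0 ≤ a) {s : ℝ} (hs : a ^ s = 2⁻¹) (k : ℕ) :
    (2⁻¹ : ℝ≥0∞) ^ k = ENNReal.ofReal ((a ^ k) ^ s) := by
  rw [← Real.rpow_natCast, ← Real.rpow_mul ha, mul_comm, Real.rpow_mul ha, hs, Real.rpow_natCast,
    ENNReal.ofReal_pow (by norm_num), ENNReal.ofReal_inv_of_pos two_pos, ENNReal.ofReal_ofNat]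

theorem coinFlips_preimage_closedBall_le_rpow (ha : 0 < a) (ha2 : a ≤ 1 / 2) {s : ℝ}
    (hs : a ^ s = 2⁻¹) (x : ℝ) {r : ℝ} (hr : 0 < r) :
    coinFlips (cantorMap a ⁻¹' closedBall x r) ≤ ENNReal.ofReal (8 * r ^ s) := by
  have ha1 : a < 1 := by linarith
  have hs0 := pos_of_rpow_eq_inv_two ha ha1 hs
  rcases le_or_gt r 1 with hr1 | hr1
  · obtain ⟨k, hk, hrk⟩ := exists_nat_pow_near_of_lt_one hr hr1 ha ha1
    calc coinFlips (cantorMap a ⁻¹' closedBall x r)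
        ≤ coinFlips (cantorMap a ⁻¹' closedBall x (a ^ k)) :=
          measure_mono (preimage_mono (closedBall_subset_closedBall hrk))
      _ ≤ 4 * 2⁻¹ ^ k := coinFlips_preimage_closedBall_le ha ha2 x k
      _ = 8 * 2⁻¹ ^ (k + 1) := by
          rw [pow_succ', ← mul_assoc, show (8 : ℝ≥0∞) = 4 * 2 by norm_num, mul_assoc 4,
            ENNReal.mul_inv_cancel two_ne_zero ENNReal.ofNat_ne_top, mul_one]
      _ ≤ ENNReal.ofReal (8 * r ^ s) := by
          rw [inv_two_pow_eq_ofReal_rpow ha.le hs, ENNReal.ofReal_mul (by norm_num),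
            ENNReal.ofReal_ofNat]
          gcongr
  · calc coinFlips (cantorMap a ⁻¹' closedBall x r) ≤ 1 := prob_le_one
      _ ≤ ENNReal.ofReal (8 * r ^ s) := by
          rw [← ENNReal.ofReal_one]
          gcongr
          nlinarith [Real.one_le_rpow hr1.le hs0.le]

theorem le_coinFlips_preimage_closedBall_rpow (ha : 0 < a) (ha1 : a < 1) {s : ℝ}
    (hs : a ^ s = 2⁻¹) (ω : ℕ → Bool) {r : ℝ} (hr : 0 < r) (hr1 : r ≤ 1) :
    ENNReal.ofReal (2⁻¹ * r ^ s) ≤ coinFlips (cantorMap a ⁻¹' closedBall (cantorMap a ω) r) := by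
  have hs0 := pos_of_rpow_eq_inv_two ha ha1 hs
  obtain ⟨k, hk, hrk⟩ := exists_nat_pow_near_of_lt_one hr hr1 ha ha1
  calc ENNReal.ofReal (2⁻¹ * r ^ s) ≤ ENNReal.ofReal (2⁻¹ * (a ^ k) ^ s) := by gcongr
    _ = 2⁻¹ ^ (k + 1) := by
        rw [ENNReal.ofReal_mul (by norm_num), ← inv_two_pow_eq_ofReal_rpow ha.le hs,
          ENNReal.ofReal_inv_of_pos two_pos, ENNReal.ofReal_ofNat, pow_succ']
    _ ≤ coinFlips (cantorMap a ⁻¹' closedBall (cantorMap a ω) (a ^ (k + 1))) :=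
        le_coinFlips_preimage_closedBall ha.le ha1 ω (k + 1)
    _ ≤ _ := measure_mono (preimage_mono (closedBall_subset_closedBall hk.le))

end CantorSet

section CantorDust

variable {a : ℝ} {n : ℕ}

noncomputable def cantorDustMap (a : ℝ) (n : ℕ) (ω : Fin n → ℕ → Bool) :
    EuclideanSpace ℝ (Fin n) :=
  WithLp.toLp 2 fun i => cantorMap a (ω i)

noncomputable def cantorDustMeasure (a : ℝ) (n : ℕ) : Measure (EuclideanSpace ℝ (Fin n)) :=
  (Measure.pi fun _ => coinFlips).map (cantorDustMap a n)

theorem continuous_cantorDustMap (ha : 0 ≤ a) (ha1 : a < 1) : Continuous (cantorDustMap a n) :=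
  (PiLp.continuous_toLp 2 _).comp
    (continuous_pi fun i => (continuous_cantorMap ha ha1).comp (continuous_apply i))

theorem isClosed_range_cantorDustMap (ha : 0 ≤ a) (ha1 : a < 1) :
    IsClosed (range (cantorDustMap a n)) :=
  (isCompact_range (continuous_cantorDustMap ha ha1)).isClosed

theorem isProbabilityMeasure_cantorDustMeasure (ha : 0 ≤ a) (ha1 : a < 1) :
    IsProbabilityMeasure (cantorDustMeasure a n) :=
  Measure.isProbabilityMeasure_map (continuous_cantorDustMap ha ha1).measurable.aemeasurable

theorem cantorDustMeasure_closedBall_le (ha : 0 < a) (ha2 : a ≤ 1 / 2) {s : ℝ}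
    (hs : a ^ s = 2⁻¹) (x : EuclideanSpace ℝ (Fin n)) {r : ℝ} (hr : 0 < r) :
    cantorDustMeasure a n (closedBall x r) ≤ 8 ^ n * ENNReal.ofReal r ^ (s * n) := by
  have ha1 : a < 1 := by linarith
  have hsub : cantorDustMap a n ⁻¹' closedBall x r ⊆
      univ.pi fun i => cantorMap a ⁻¹' closedBall (x i) r :=
    fun ω hω i _ => (PiLp.dist_apply_le _ x i).trans hω
  calc cantorDustMeasure a n (closedBall x r)
      ≤ ∏ i, coinFlips (cantorMap a ⁻¹' closedBall (x i) r) := by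
        rw [cantorDustMeasure, Measure.map_apply (continuous_cantorDustMap ha.le ha1).measurable
          measurableSet_closedBall, ← Measure.pi_pi]
        exact measure_mono hsub
    _ ≤ ∏ _i : Fin n, ENNReal.ofReal (8 * r ^ s) :=
        Finset.prod_le_prod' fun i _ => coinFlips_preimage_closedBall_le_rpow ha ha2 hs _ hr
    _ = 8 ^ n * ENNReal.ofReal r ^ (s * n) := by
        rw [Finset.prod_const, Finset.card_univ, Fintype.card_fin, ENNReal.ofReal_mul (by norm_num),
          ENNReal.ofReal_ofNat, mul_pow, ENNReal.rpow_mul_natCast, ENNReal.ofReal_rpow_of_pos hr]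

theorem le_cantorDustMeasure_closedBall (ha : 0 < a) (ha1 : a < 1) {s : ℝ} (hs : a ^ s = 2⁻¹)
    (ω : Fin n → ℕ → Bool) {r : ℝ} (hr : 0 < r) (hrn : r ≤ √n) :
    ENNReal.ofReal ((2 * √n ^ s)⁻¹ ^ n * r ^ (s * n)) ≤
      cantorDustMeasure a n (closedBall (cantorDustMap a n ω) r) := by
  have hn : 0 < √n := hr.trans_le hrn
  have hsub : (univ.pi fun i => cantorMap a ⁻¹' closedBall (cantorMap a (ω i)) (r / √n)) ⊆
      cantorDustMap a n ⁻¹' closedBall (cantorDustMap a n ω) r := by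
    intro ω' hω'
    refine mem_closedBall.2 ((dist_le_sqrt_card_mul (by positivity) fun i => hω' i trivial).trans
      (le_of_eq ?_))
    rw [Fintype.card_fin, mul_div_cancel₀ _ hn.ne']
  calc ENNReal.ofReal ((2 * √n ^ s)⁻¹ ^ n * r ^ (s * n))
      = ∏ _i : Fin n, ENNReal.ofReal (2⁻¹ * (r / √n) ^ s) := by
        rw [Finset.prod_const, Finset.card_univ, Fintype.card_fin, ← ENNReal.ofReal_pow
          (by positivity), Real.rpow_mul_natCast hr.le, Real.div_rpow hr.le hn.le, ← mul_pow]
        congr 2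
        field_simp
    _ ≤ ∏ i, coinFlips (cantorMap a ⁻¹' closedBall (cantorMap a (ω i)) (r / √n)) :=
        Finset.prod_le_prod' fun i _ => le_coinFlips_preimage_closedBall_rpow ha ha1 hs (ω i)
          (by positivity) ((div_le_one hn).2 hrn)
    _ ≤ cantorDustMeasure a n (closedBall (cantorDustMap a n ω) r) := by
        rw [cantorDustMeasure, Measure.map_apply (continuous_cantorDustMap ha.le ha1).measurable
          measurableSet_closedBall, ← Measure.pi_pi]
        exact measure_mono hsub

theorem ediam_image_cantorDustMap_le (ha : 0 ≤ a) (ha1 : a < 1) (k : ℕ)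
    (w : Fin n → Finset.range k → Bool) :
    ediam (cantorDustMap a n '' {ω | ∀ i, (Finset.range k).restrict (ω i) = w i}) ≤
      ENNReal.ofReal (√n * a ^ k) := by
  refine ediam_image_le_iff.2 fun ω hω ω' hω' => ?_
  rw [edist_dist]
  refine ENNReal.ofReal_le_ofReal ((dist_le_sqrt_card_mul (by positivity) fun i =>
    dist_cantorMap_le ha ha1 fun j hj => ?_).trans_eq (by rw [Fintype.card_fin]))
  exact congrFun ((hω i).trans (hω' i).symm) ⟨j, Finset.mem_range.2 hj⟩

theorem dimH_range_cantorDustMap (ha : 0 < a) (ha2 : a ≤ 1 / 2) {s : ℝ} (hs : a ^ s = 2⁻¹) :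
    dimH (range (cantorDustMap a n)) = ENNReal.ofReal (s * n) := by
  have ha1 : a < 1 := by linarith
  have hsn : 0 ≤ s * n := mul_nonneg (pos_of_rpow_eq_inv_two ha ha1 hs).le n.cast_nonneg
  refine le_antisymm ?_ ?_
  · refine dimH_le_of_forall_cover (N := 2 ^ n)
      (fun k (w : Fin n → Finset.range k → Bool) =>
        cantorDustMap a n '' {ω | ∀ i, (Finset.range k).restrict (ω i) = w i})
      (fun k => ?_) (fun k => by simp [← pow_mul, mul_comm]) (Real.sqrt_nonneg _) ha ha1
      (ediam_image_cantorDustMap_le ha.le ha1) hsn ?_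
    · rintro _ ⟨ω, rfl⟩
      exact mem_iUnion.2 ⟨fun i => (Finset.range k).restrict (ω i), mem_image_of_mem _ fun _ => rfl⟩
    · rw [Real.rpow_mul_natCast ha.le, hs, Nat.cast_pow, ← mul_pow]
      norm_num
  · have : IsProbabilityMeasure (cantorDustMeasure a n) :=
      isProbabilityMeasure_cantorDustMeasure ha.le ha1
    have hrange : cantorDustMeasure a n (range (cantorDustMap a n)) ≠ 0 := by
      rw [cantorDustMeasure, Measure.map_apply (continuous_cantorDustMap ha.le ha1).measurable
        (isClosed_range_cantorDustMap ha.le ha1).measurableSet, preimage_range, measure_univ]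
      exact one_ne_zero
    refine le_dimH_of_measure_closedBall_le (d := (s * n).toNNReal) (C := 8 ^ n)
      (ENNReal.pow_ne_top ENNReal.ofNat_ne_top) (fun x r hr => ?_) hrange
    rw [Real.coe_toNNReal _ hsn]
    exact cantorDustMeasure_closedBall_le ha ha2 hs x hr

end CantorDust

theorem tendsto_rpow_mul_exp_neg_div_nhdsGT_zero (p : ℝ) {c : ℝ} (hc : 0 < c) :
    Tendsto (fun t => t ^ p * exp (-c / t)) (𝓝[>] 0) (𝓝 0) := by
  refine ((tendsto_rpow_mul_exp_neg_mul_atTop_nhds_zero (-p) c hc).comp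
    tendsto_inv_nhdsGT_zero).congr' (eventually_nhdsWithin_of_forall fun t (ht : 0 < t) => ?_)
  simp only [Function.comp_apply, Real.inv_rpow ht.le, Real.rpow_neg ht.le, inv_inv,
    div_eq_mul_inv, neg_mul]

section HeatKernel

variable {n : ℕ}

/-- The set `T_α(u)` for the heat extension `u(x, t) = ∫ heatK n (x - ξ) t dμ(ξ)` of `μ`. -/
def heatSingularSet (n : ℕ) (α : ℝ) (μ : Measure (EuclideanSpace ℝ (Fin n))) :
    Set (EuclideanSpace ℝ (Fin n)) :=
  {x | 0 < limsup (fun t : ℝ => ENNReal.ofReal (t ^ (α / 2)) *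
    ∫⁻ ξ, ENNReal.ofReal (heatK n (x - ξ) t) ∂μ) (𝓝[>] 0)}

theorem heatK_le_of_le_norm {z : EuclideanSpace ℝ (Fin n)} {t δ : ℝ} (ht : 0 < t) (hδ : 0 ≤ δ)
    (hz : δ ≤ ‖z‖) : heatK n z t ≤ (4 * π * t) ^ (-(n : ℝ) / 2) * exp (-δ ^ 2 / (4 * t)) := by
  unfold heatK
  gcongr

theorem le_heatK_of_norm_sq_le {z : EuclideanSpace ℝ (Fin n)} {t : ℝ} (ht : 0 < t)
    (hz : ‖z‖ ^ 2 ≤ t) : (4 * π * t) ^ (-(n : ℝ) / 2) * exp (-4⁻¹) ≤ heatK n z t := by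
  unfold heatK
  gcongr
  rw [neg_div, neg_le_neg_iff, div_le_iff₀ (by positivity)]
  linarith

theorem notMem_heatSingularSet {μ : Measure (EuclideanSpace ℝ (Fin n))} [IsFiniteMeasure μ]
    {x : EuclideanSpace ℝ (Fin n)} {δ : ℝ} (hδ : 0 < δ) (hμ : ∀ᵐ ξ ∂μ, δ ≤ dist x ξ) (α : ℝ) :
    x ∉ heatSingularSet n α μ := by
  set g : ℝ → ℝ := fun t => t ^ (α / 2) * ((4 * π * t) ^ (-(n : ℝ) / 2) * exp (-δ ^ 2 / (4 * t)))
  have hg : Tendsto g (𝓝[>] 0) (𝓝 0) := by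
    have := (tendsto_rpow_mul_exp_neg_div_nhdsGT_zero ((α - n) / 2)
      (by positivity : 0 < δ ^ 2 / 4)).const_mul ((4 * π) ^ (-(n : ℝ) / 2))
    rw [mul_zero] at this
    refine this.congr' (eventually_nhdsWithin_of_forall fun t (ht : 0 < t) => ?_)
    simp only [g, Real.mul_rpow (by positivity : (0 : ℝ) ≤ 4 * π) ht.le]
    rw [show (α - n) / 2 = α / 2 + -(n : ℝ) / 2 by ring, Real.rpow_add ht]
    field_simp
  have hbound : ∀ᶠ t in 𝓝[>] (0 : ℝ), ENNReal.ofReal (t ^ (α / 2)) *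
      ∫⁻ ξ, ENNReal.ofReal (heatK n (x - ξ) t) ∂μ ≤ ENNReal.ofReal (g t) * μ univ := by
    filter_upwards [self_mem_nhdsWithin] with t (ht : 0 < t)
    have hint : ∫⁻ ξ, ENNReal.ofReal (heatK n (x - ξ) t) ∂μ
        ≤ ENNReal.ofReal ((4 * π * t) ^ (-(n : ℝ) / 2) * exp (-δ ^ 2 / (4 * t))) * μ univ := by
      rw [← lintegral_const]
      refine lintegral_mono_ae (hμ.mono fun ξ hξ => ENNReal.ofReal_le_ofReal ?_)
      exact heatK_le_of_le_norm ht hδ.le (by rwa [← dist_eq_norm])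
    calc _ ≤ ENNReal.ofReal (t ^ (α / 2)) * (ENNReal.ofReal ((4 * π * t) ^ (-(n : ℝ) / 2) *
            exp (-δ ^ 2 / (4 * t))) * μ univ) := by gcongr
      _ = ENNReal.ofReal (g t) * μ univ := by
          rw [← mul_assoc, ← ENNReal.ofReal_mul (by positivity)]
  have hlim : Tendsto (fun t => ENNReal.ofReal (g t) * μ univ) (𝓝[>] 0) (𝓝 0) := by
    simpa using ENNReal.Tendsto.mul_const (ENNReal.tendsto_ofReal hg)
      (Or.inr (measure_ne_top μ univ))
  exact ((limsup_le_limsup hbound).trans_eq hlim.limsup_eq).not_gt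

theorem ofReal_le_rpow_mul_lintegral_heatK {μ : Measure (EuclideanSpace ℝ (Fin n))}
    {x : EuclideanSpace ℝ (Fin n)} {α c t : ℝ} (ht : 0 < t)
    (h : ENNReal.ofReal (c * √t ^ ((n : ℝ) - α)) ≤ μ (closedBall x √t)) :
    ENNReal.ofReal ((4 * π) ^ (-(n : ℝ) / 2) * exp (-4⁻¹) * c) ≤
      ENNReal.ofReal (t ^ (α / 2)) * ∫⁻ ξ, ENNReal.ofReal (heatK n (x - ξ) t) ∂μ := by
  have hball : ENNReal.ofReal ((4 * π * t) ^ (-(n : ℝ) / 2) * exp (-4⁻¹)) *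
      μ (closedBall x √t) ≤ ∫⁻ ξ, ENNReal.ofReal (heatK n (x - ξ) t) ∂μ := by
    rw [← setLIntegral_const]
    refine (setLIntegral_mono' measurableSet_closedBall fun ξ hξ => ?_).trans
      (setLIntegral_le_lintegral _ _)
    refine ENNReal.ofReal_le_ofReal (le_heatK_of_norm_sq_le ht ?_)
    rw [← dist_eq_norm, dist_comm, ← Real.sq_sqrt ht.le]
    exact pow_le_pow_left₀ dist_nonneg (mem_closedBall.1 hξ) 2
  have hpow : t ^ (α / 2) * t ^ (-(n : ℝ) / 2) * √t ^ ((n : ℝ) - α) = 1 := by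
    rw [Real.sqrt_eq_rpow, ← Real.rpow_mul ht.le, ← Real.rpow_add ht, ← Real.rpow_add ht]
    convert Real.rpow_zero t using 2
    ring
  calc ENNReal.ofReal ((4 * π) ^ (-(n : ℝ) / 2) * exp (-4⁻¹) * c)
      = ENNReal.ofReal (t ^ (α / 2)) * (ENNReal.ofReal ((4 * π * t) ^ (-(n : ℝ) / 2) *
          exp (-4⁻¹)) * ENNReal.ofReal (c * √t ^ ((n : ℝ) - α))) := by
        rw [← ENNReal.ofReal_mul (by positivity), ← ENNReal.ofReal_mul (by positivity),
          Real.mul_rpow (by positivity) ht.le]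
        congr 1
        linear_combination (-(4 * π) ^ (-(n : ℝ) / 2) * exp (-4⁻¹) * c) * hpow
    _ ≤ _ := by
        gcongr
        exact (mul_le_mul_right h _).trans hball

theorem mem_heatSingularSet {μ : Measure (EuclideanSpace ℝ (Fin n))}
    {x : EuclideanSpace ℝ (Fin n)} {α c r₀ : ℝ} (hc : 0 < c) (hr₀ : 0 < r₀)
    (h : ∀ r, 0 < r → r ≤ r₀ → ENNReal.ofReal (c * r ^ ((n : ℝ) - α)) ≤ μ (closedBall x r)) :
    x ∈ heatSingularSet n α μ := by
  have hfreq : ∃ᶠ t in 𝓝[>] (0 : ℝ),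
      ENNReal.ofReal ((4 * π) ^ (-(n : ℝ) / 2) * exp (-4⁻¹) * c) ≤
        ENNReal.ofReal (t ^ (α / 2)) * ∫⁻ ξ, ENNReal.ofReal (heatK n (x - ξ) t) ∂μ := by
    refine (eventually_of_mem (Ioo_mem_nhdsGT (pow_pos hr₀ 2)) fun t ⟨ht, htr⟩ => ?_).frequently
    exact ofReal_le_rpow_mul_lintegral_heatK ht
      (h _ (Real.sqrt_pos.2 ht) (Real.sqrt_le_iff.2 ⟨hr₀.le, htr.le⟩))
  exact (ENNReal.ofReal_pos.2 (by positivity)).trans_le (le_limsup_of_frequently_le' hfreq)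

theorem heatSingularSet_cantorDustMeasure (hn : 0 < n) {a s α : ℝ} (ha : 0 < a) (ha1 : a < 1)
    (hs : a ^ s = 2⁻¹) (hsn : s * n = n - α) :
    heatSingularSet n α (cantorDustMeasure a n) = range (cantorDustMap a n) := by
  have := isProbabilityMeasure_cantorDustMeasure (n := n) ha.le ha1
  have hK := isClosed_range_cantorDustMap (n := n) ha.le ha1
  ext x
  constructor
  · intro hx
    by_contra hxK
    obtain ⟨δ, hδ, hball⟩ := Metric.isOpen_iff.1 hK.isOpen_compl x hxK
    refine notMem_heatSingularSet hδ ?_ α hx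
    exact (ae_map_mem_range _ hK.measurableSet _).mono fun ξ hξ =>
      not_lt.1 fun h => hball (mem_ball'.2 h) hξ
  · rintro ⟨ω, rfl⟩
    refine mem_heatSingularSet (c := (2 * √n ^ s)⁻¹ ^ n) (by positivity)
      (Real.sqrt_pos.2 (Nat.cast_pos.2 hn)) fun r hr hrn => ?_
    rw [← hsn]
    exact le_cantorDustMeasure_closedBall ha ha1 hs ω hr hrn

end HeatKernel

theorem stmt12 (n : ℕ) (α : ℝ) (hα : α ∈ Ico (0 : ℝ) n) :
    ∃ μ : Measure (EuclideanSpace ℝ (Fin n)), IsFiniteMeasure μ ∧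
      dimH {x : EuclideanSpace ℝ (Fin n) |
          0 < limsup (fun t : ℝ =>
              ENNReal.ofReal (t ^ (α / 2)) *
                ∫⁻ ξ, ENNReal.ofReal (heatK n (x - ξ) t) ∂μ)
            (nhdsWithin 0 (Ioi 0))} = ENNReal.ofReal ((n : ℝ) - α) := by
  obtain ⟨hα0, hαn⟩ := hα
  have hn : (0 : ℝ) < n := hα0.trans_lt hαn
  have hsn : ((n : ℝ) - α) / n * n = n - α := div_mul_cancel₀ _ hn.ne'
  obtain ⟨a, ha, ha2, hs⟩ := exists_rpow_eq_inv_two (s := ((n : ℝ) - α) / n)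
    (div_pos (by linarith) hn) ((div_le_one hn).2 (by linarith))
  have ha1 : a < 1 := by linarith
  have := isProbabilityMeasure_cantorDustMeasure (n := n) ha.le ha1
  refine ⟨cantorDustMeasure a n, inferInstance, ?_⟩
  change dimH (heatSingularSet n α _) = _
  rw [heatSingularSet_cantorDustMeasure (Nat.cast_pos.1 hn) ha ha1 hs hsn,
    dimH_range_cantorDustMap ha ha2 hs, hsn]
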